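/- arXiv:2004.07286 — 6 statements merged into one kernel-verified Lean document; each statement's English description precedes it below -/
import Mathlib

section
/- For any x, y in the closed unit ball of ℝ^d and any ε with 0 < ε ≤ 1/2, the error term e(ε,x,y) := (√(1/ε² - ‖x‖²) - √(1/ε² - ‖y‖²))² satisfies 0 ≤ e(ε,x,y) ≤ (4/3)‖x-y‖²ε². -/
set_option maxHeartbeats 1000000

private lemma aux_real (a b n ε : ℝ) (ha0 : 0 ≤ a) (hb0 : 0 ≤ b) (hn0 : 0 ≤ n)
    (ha : a ≤ 1) (hb : b ≤ 1) (hab : |a - b| ≤ n)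
    (hε0 : 0 < ε) (hε : ε ≤ 1 / 2) :
    (Real.sqrt (1 / ε ^ 2 - a ^ 2) - Real.sqrt (1 / ε ^ 2 - b ^ 2)) ^ 2 ≤
      4 / 3 * n ^ 2 * ε ^ 2 := by
  have hε2 : (0:ℝ) < ε ^ 2 := by positivity
  have hA : (4:ℝ) ≤ 1 / ε ^ 2 := by
    rw [le_div_iff₀ hε2]; nlinarith
  have hx2 : a ^ 2 ≤ 1 := by nlinarith
  have hy2 : b ^ 2 ≤ 1 := by nlinarith
  set s := Real.sqrt (1 / ε ^ 2 - a ^ 2) with hs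
  set t := Real.sqrt (1 / ε ^ 2 - b ^ 2) with ht
  have hs2 : s ^ 2 = 1 / ε ^ 2 - a ^ 2 := Real.sq_sqrt (by linarith)
  have ht2 : t ^ 2 = 1 / ε ^ 2 - b ^ 2 := Real.sq_sqrt (by linarith)
  have hsl : Real.sqrt (1 / ε ^ 2 - 1) ≤ s := Real.sqrt_le_sqrt (by linarith)
  have htl : Real.sqrt (1 / ε ^ 2 - 1) ≤ t := Real.sqrt_le_sqrt (by linarith)
  have hr2 : Real.sqrt (1 / ε ^ 2 - 1) ^ 2 = 1 / ε ^ 2 - 1 := Real.sq_sqrt (by linarith)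
  have hr0 : 0 ≤ Real.sqrt (1 / ε ^ 2 - 1) := Real.sqrt_nonneg _
  have hst : (0:ℝ) < (s + t) ^ 2 := by nlinarith
  have hsum : 4 * (1 / ε ^ 2 - 1) ≤ (s + t) ^ 2 := by
    nlinarith [mul_le_mul hsl htl hr0 (by linarith : (0:ℝ) ≤ s)]
  have hkey : (s - t) ^ 2 * (s + t) ^ 2 = (b ^ 2 - a ^ 2) ^ 2 := by
    have : (s - t) ^ 2 * (s + t) ^ 2 = (s ^ 2 - t ^ 2) ^ 2 := by ring
    rw [this, hs2, ht2]; ring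
  have hD : (b ^ 2 - a ^ 2) ^ 2 ≤ 4 * n ^ 2 := by
    have h1 : (a - b) ^ 2 ≤ n ^ 2 := by
      rw [← sq_abs]; exact pow_le_pow_left₀ (abs_nonneg _) hab 2
    nlinarith
  rw [← sub_nonneg]
  have hdiv : (4 / 3 * n ^ 2 * ε ^ 2 - (s - t) ^ 2) * (s + t) ^ 2 ≥ 0 := by
    have hε1 : ε ^ 2 ≤ 1 / 4 := by nlinarith
    have hR0 : 0 ≤ 4 / 3 * n ^ 2 * ε ^ 2 := by positivity
    have h2 : 4 / 3 * n ^ 2 * ε ^ 2 * (4 * (1 / ε ^ 2 - 1)) ≥ 4 * n ^ 2 := by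
      have heq : 4 / 3 * n ^ 2 * ε ^ 2 * (4 * (1 / ε ^ 2 - 1))
          = 16 / 3 * n ^ 2 * (1 - ε ^ 2) := by
        field_simp; ring
      rw [heq]; nlinarith
    nlinarith [mul_le_mul_of_nonneg_left hsum hR0]
  exact nonneg_of_mul_nonneg_right (by linarith [mul_comm ((s + t) ^ 2) (4 / 3 * n ^ 2 * ε ^ 2 - (s - t) ^ 2)] : 0 ≤ (s + t) ^ 2 * (4 / 3 * n ^ 2 * ε ^ 2 - (s - t) ^ 2)) hst

theorem stmt_1 (d : ℕ) (x y : EuclideanSpace ℝ (Fin d)) (hx : ‖x‖ ≤ 1) (hy : ‖y‖ ≤ 1)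
    (ε : ℝ) (hε0 : 0 < ε) (hε : ε ≤ 1 / 2) :
    0 ≤ (Real.sqrt (1 / ε ^ 2 - ‖x‖ ^ 2) - Real.sqrt (1 / ε ^ 2 - ‖y‖ ^ 2)) ^ 2 ∧
    (Real.sqrt (1 / ε ^ 2 - ‖x‖ ^ 2) - Real.sqrt (1 / ε ^ 2 - ‖y‖ ^ 2)) ^ 2 ≤
      4 / 3 * ‖x - y‖ ^ 2 * ε ^ 2 := by
  exact ⟨sq_nonneg _, aux_real ‖x‖ ‖y‖ ‖x - y‖ ε (norm_nonneg x) (norm_nonneg y)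
    (norm_nonneg _) hx hy (abs_norm_sub_norm_le x y) hε0 hε⟩
end

section
/- Let x, y be points in the closed unit ball of ℝ^d and ε ∈ (0,1]. Define the shrink-lift transformation x↑ := (εx; √(1 - ‖εx‖²)) ∈ ℝ^{d+1}, a point on the unit sphere S^{d+1}. Then the angle θ between x↑ and y↑ satisfies θ = 2·arcsin((ε/2)·√(‖x-y‖² + e(ε,x,y))), where e(ε,x,y) = (√(1/ε² - ‖x‖²) - √(1/ε² - ‖y‖²))². In particular θ ≥ 2·arcsin((ε/2)·‖x-y‖). -/
noncomputable def shrinkLift (d : ℕ) (ε : ℝ) (x : EuclideanSpace ℝ (Fin d)) :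
    EuclideanSpace ℝ (Fin (d + 1)) :=
  WithLp.toLp 2 (fun i : Fin (d + 1) => if h : (i : ℕ) < d then ε * x ⟨i, h⟩ else Real.sqrt (1 - ε ^ 2 * ‖x‖ ^ 2))

/-!
Both lifted points lie on the unit sphere, and for unit vectors the angle is `2 arcsin (‖u - v‖ / 2)`.
The chord `x↑ - y↑` has coordinates `ε (x - y)` and `√(1 - ε²‖x‖²) - √(1 - ε²‖y‖²)
= ε (√(1/ε² - ‖x‖²) - √(1/ε² - ‖y‖²))`, so its length is `ε √(‖x - y‖² + e(ε,x,y))`;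
the lower bound follows by dropping `e(ε,x,y) ≥ 0` and monotonicity of `arcsin`.
-/

open InnerProductGeometry

theorem Real.arccos_one_sub_two_mul_sq {s : ℝ} (hs0 : 0 ≤ s) (hs1 : s ≤ 1) :
    Real.arccos (1 - 2 * s ^ 2) = 2 * Real.arcsin s := by
  apply Real.injOn_cos ⟨Real.arccos_nonneg _, Real.arccos_le_pi _⟩
  · constructor
    · linarith [Real.arcsin_nonneg.2 hs0]
    · linarith [Real.arcsin_le_pi_div_two s]
  · rw [Real.cos_arccos (by nlinarith) (by nlinarith), Real.cos_two_mul, Real.cos_arcsin,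
      Real.sq_sqrt (by nlinarith)]
    ring

theorem InnerProductGeometry.angle_eq_two_mul_arcsin_of_norm_eq_one {V : Type*}
    [NormedAddCommGroup V] [InnerProductSpace ℝ V] {u v : V} (hu : ‖u‖ = 1) (hv : ‖v‖ = 1) :
    angle u v = 2 * Real.arcsin (‖u - v‖ / 2) := by
  have hchord : ‖u - v‖ ^ 2 = 2 - 2 * inner ℝ u v := by
    rw [norm_sub_sq_real, hu, hv]; ring
  have hinner : inner ℝ u v = 1 - 2 * (‖u - v‖ / 2) ^ 2 := by linarith
  have hle : ‖u - v‖ ≤ 2 := by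
    linarith [norm_sub_le u v]
  rw [← Real.arccos_one_sub_two_mul_sq (by positivity) (by linarith), ← hinner, angle, hu, hv,
    mul_one, div_one]

theorem EuclideanSpace.norm_sq_eq_sum_castSucc_add_last {d : ℕ}
    (v : EuclideanSpace ℝ (Fin (d + 1))) :
    ‖v‖ ^ 2 = ∑ i : Fin d, v i.castSucc ^ 2 + v (Fin.last d) ^ 2 := by
  rw [EuclideanSpace.real_norm_sq_eq, Fin.sum_univ_castSucc]

theorem shrinkLift_castSucc {d : ℕ} (ε : ℝ) (x : EuclideanSpace ℝ (Fin d)) (i : Fin d) :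
    shrinkLift d ε x i.castSucc = ε * x i := by
  simp [shrinkLift]

theorem shrinkLift_last {d : ℕ} (ε : ℝ) (x : EuclideanSpace ℝ (Fin d)) :
    shrinkLift d ε x (Fin.last d) = Real.sqrt (1 - ε ^ 2 * ‖x‖ ^ 2) := by
  simp [shrinkLift]

theorem norm_sq_shrinkLift (d : ℕ) (ε : ℝ) (x : EuclideanSpace ℝ (Fin d)) :
    ‖shrinkLift d ε x‖ ^ 2 = ε ^ 2 * ‖x‖ ^ 2 + Real.sqrt (1 - ε ^ 2 * ‖x‖ ^ 2) ^ 2 := by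
  simp only [EuclideanSpace.norm_sq_eq_sum_castSucc_add_last, shrinkLift_castSucc, shrinkLift_last,
    EuclideanSpace.real_norm_sq_eq x, mul_pow, Finset.mul_sum]

theorem norm_sq_shrinkLift_sub (d : ℕ) (ε : ℝ) (x y : EuclideanSpace ℝ (Fin d)) :
    ‖shrinkLift d ε x - shrinkLift d ε y‖ ^ 2 =
      ε ^ 2 * ‖x - y‖ ^ 2 +
        (Real.sqrt (1 - ε ^ 2 * ‖x‖ ^ 2) - Real.sqrt (1 - ε ^ 2 * ‖y‖ ^ 2)) ^ 2 := by
  simp only [EuclideanSpace.norm_sq_eq_sum_castSucc_add_last, PiLp.sub_apply, shrinkLift_castSucc,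
    shrinkLift_last, EuclideanSpace.real_norm_sq_eq (x - y), ← mul_sub, mul_pow, Finset.mul_sum]

theorem norm_shrinkLift {d : ℕ} {ε : ℝ} {x : EuclideanSpace ℝ (Fin d)}
    (h : ε ^ 2 * ‖x‖ ^ 2 ≤ 1) : ‖shrinkLift d ε x‖ = 1 := by
  have hsq := norm_sq_shrinkLift d ε x
  rw [Real.sq_sqrt (by linarith), add_sub_cancel] at hsq
  exact (pow_eq_one_iff_of_nonneg (norm_nonneg _) two_ne_zero).1 hsq

theorem Real.mul_sqrt_one_div_sq_sub_sq {ε : ℝ} (hε : 0 < ε) (r : ℝ) :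
    ε * Real.sqrt (1 / ε ^ 2 - r ^ 2) = Real.sqrt (1 - ε ^ 2 * r ^ 2) := by
  rw [← Real.sqrt_sq hε.le, ← Real.sqrt_mul (by positivity), Real.sqrt_sq hε.le]
  congr 1
  field_simp

theorem norm_shrinkLift_sub (d : ℕ) {ε : ℝ} (hε : 0 < ε) (x y : EuclideanSpace ℝ (Fin d)) :
    ‖shrinkLift d ε x - shrinkLift d ε y‖ =
      ε * Real.sqrt (‖x - y‖ ^ 2 +
        (Real.sqrt (1 / ε ^ 2 - ‖x‖ ^ 2) - Real.sqrt (1 / ε ^ 2 - ‖y‖ ^ 2)) ^ 2) := by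
  refine (pow_left_inj₀ (norm_nonneg _) (by positivity) two_ne_zero).1 ?_
  rw [norm_sq_shrinkLift_sub, mul_pow, Real.sq_sqrt (by positivity),
    ← Real.mul_sqrt_one_div_sq_sub_sq hε, ← Real.mul_sqrt_one_div_sq_sub_sq hε]
  ring

theorem stmt_2 (d : ℕ) (x y : EuclideanSpace ℝ (Fin d)) (hx : ‖x‖ ≤ 1) (hy : ‖y‖ ≤ 1)
    (ε : ℝ) (hε0 : 0 < ε) (hε : ε ≤ 1) :
    InnerProductGeometry.angle (shrinkLift d ε x) (shrinkLift d ε y) =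
      2 * Real.arcsin (ε / 2 *
        Real.sqrt (‖x - y‖ ^ 2 +
          (Real.sqrt (1 / ε ^ 2 - ‖x‖ ^ 2) - Real.sqrt (1 / ε ^ 2 - ‖y‖ ^ 2)) ^ 2)) ∧
    2 * Real.arcsin (ε / 2 * ‖x - y‖) ≤
      InnerProductGeometry.angle (shrinkLift d ε x) (shrinkLift d ε y) := by
  have hε2 : ε ^ 2 ≤ 1 := pow_le_one₀ hε0.le hε
  have hunit {z : EuclideanSpace ℝ (Fin d)} (hz : ‖z‖ ≤ 1) : ‖shrinkLift d ε z‖ = 1 :=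
    norm_shrinkLift (mul_le_one₀ hε2 (by positivity) (pow_le_one₀ (norm_nonneg z) hz))
  have hangle : angle (shrinkLift d ε x) (shrinkLift d ε y) = 2 * Real.arcsin (ε / 2 *
      Real.sqrt (‖x - y‖ ^ 2 +
        (Real.sqrt (1 / ε ^ 2 - ‖x‖ ^ 2) - Real.sqrt (1 / ε ^ 2 - ‖y‖ ^ 2)) ^ 2)) := by
    rw [angle_eq_two_mul_arcsin_of_norm_eq_one (hunit hx) (hunit hy), norm_shrinkLift_sub d hε0]
    ring_nf
  refine ⟨hangle, hangle ▸ ?_⟩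
  gcongr
  exact Real.le_sqrt_of_sq_le (le_add_of_nonneg_right (sq_nonneg _))
end

section
/- Let 0 < a ≤ r, let q_a = (a,0,…,0) and q_{-a} = (-a,0,…,0) in ℝ^d. If a point v = (x₁,…,x_d) satisfies max(‖v - q_a‖, ‖v - q_{-a}‖) ≤ r, then ((r+a)/(r-a))·x₁² + Σ_{i=2}^d x_i² ≤ r² - a². -/
theorem stmt_6 (d : ℕ) (a r : ℝ) (ha0 : 0 < a) (har : a < r)
    (v : EuclideanSpace ℝ (Fin (d + 1)))
    (hv : max ‖v - EuclideanSpace.single 0 a‖ ‖v - EuclideanSpace.single 0 (-a)‖ ≤ r) :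
    (r + a) / (r - a) * (v 0) ^ 2 + ∑ i ∈ Finset.univ.erase 0, (v i) ^ 2 ≤ r ^ 2 - a ^ 2 := by
  set S : ℝ := ∑ i ∈ Finset.univ.erase 0, (v i) ^ 2 with hS
  have hr0 : (0:ℝ) ≤ r := le_trans ha0.le har.le
  have key : ∀ b : ℝ, ‖v - EuclideanSpace.single 0 b‖ ≤ r → (v 0 - b)^2 + S ≤ r^2 := by
    intro b hb
    have h1 : ‖v - EuclideanSpace.single 0 b‖^2 ≤ r^2 := by
      have := norm_nonneg (v - EuclideanSpace.single 0 b)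
      nlinarith
    have h2 : ‖v - EuclideanSpace.single 0 b‖^2 = ∑ i, ((v - EuclideanSpace.single 0 b : EuclideanSpace ℝ (Fin (d+1))) i)^2 := by
      rw [EuclideanSpace.norm_eq]
      rw [Real.sq_sqrt (by positivity)]
      congr 1; ext i; rw [Real.norm_eq_abs, sq_abs]
    have h3 : ∑ i, ((v - EuclideanSpace.single 0 b : EuclideanSpace ℝ (Fin (d+1))) i)^2 = (v 0 - b)^2 + S := by
      rw [← Finset.add_sum_erase _ _ (Finset.mem_univ (0 : Fin (d+1)))]
      have e0 : (v - EuclideanSpace.single 0 b : EuclideanSpace ℝ (Fin (d+1))) 0 = v 0 - b := by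
        simp [EuclideanSpace.single_apply]
      rw [e0]
      congr 1
      apply Finset.sum_congr rfl
      intro i hi
      have hi0 : i ≠ 0 := Finset.ne_of_mem_erase hi
      simp [EuclideanSpace.single_apply, hi0]
    rw [h2, h3] at h1
    exact h1
  have h1 := key a ((max_le_iff.mp hv).1)
  have h2 := key (-a) ((max_le_iff.mp hv).2)
  have hS0 : 0 ≤ S := Finset.sum_nonneg fun i _ => sq_nonneg _
  have hra : 0 < r - a := by linarith
  rw [div_mul_eq_mul_div, div_add' _ _ _ hra.ne', div_le_iff₀ hra]
  nlinarith [sq_nonneg (v 0 + a - r), sq_nonneg (v 0 - a + r), sq_nonneg (v 0), mul_nonneg hS0 ha0.le]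
end

section
/- Let c_min = 3/(2√2), let c > c_min, and let 0 ≤ a ≤ r. If a point v = (x₁,…,x_d) in ℝ^d satisfies ((r+a)/(r-a))·x₁² + Σ_{i=2}^d x_i² ≤ (cr/c_min)² - a², then max(‖v - q_a‖, ‖v - q_{-a}‖) ≤ cr, where q_a = (a,0,…,0) and q_{-a} = (-a,0,…,0). -/
theorem stmt_7 (d : ℕ) (a r c : ℝ) (hr : 0 < r) (ha0 : 0 ≤ a) (har : a < r)
    (hc : 3 / (2 * Real.sqrt 2) < c)
    (v : EuclideanSpace ℝ (Fin (d + 1)))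
    (hv : (r + a) / (r - a) * (v 0) ^ 2 + ∑ i ∈ Finset.univ.erase 0, (v i) ^ 2 ≤
      (c * r / (3 / (2 * Real.sqrt 2))) ^ 2 - a ^ 2) :
    max ‖v - EuclideanSpace.single 0 a‖ ‖v - EuclideanSpace.single 0 (-a)‖ ≤ c * r := by
  have hs2 : Real.sqrt 2 ^ 2 = 2 := Real.sq_sqrt (by norm_num)
  have hs2pos : 0 < Real.sqrt 2 := Real.sqrt_pos.mpr (by norm_num)
  have h3 : 2 * Real.sqrt 2 < 3 := by nlinarith [hs2, hs2pos]
  have hden : (0:ℝ) < 2 * Real.sqrt 2 := by positivity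
  have hc1 : 1 < c := lt_trans ((one_lt_div hden).mpr h3) hc
  have hmul : 3 < c * (2 * Real.sqrt 2) := (div_lt_iff₀ hden).mp hc
  have hsq : (c * (2 * Real.sqrt 2)) ^ 2 = 8 * c ^ 2 := by
    rw [mul_pow, mul_pow, hs2]; ring
  have hc2 : 9 < 8 * c ^ 2 := by nlinarith [hmul, hsq]
  set x := v 0 with hx
  set S := ∑ i ∈ Finset.univ.erase 0, (v i) ^ 2 with hS
  have hSnn : 0 ≤ S := Finset.sum_nonneg fun i _ => sq_nonneg _
  have hra : 0 < r - a := by linarith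
  have hK : (c * r / (3 / (2 * Real.sqrt 2))) ^ 2 = 8 * c ^ 2 * r ^ 2 / 9 := by
    rw [div_pow]
    rw [div_pow]
    rw [mul_pow, mul_pow]
    rw [hs2]
    field_simp
    ring
  rw [hK] at hv
  have hdiv : (r + a) / (r - a) * x ^ 2 * (r - a) = (r + a) * x ^ 2 := by
    field_simp
  have hv' : (r + a) * x ^ 2 + S * (r - a) ≤ (8 * c ^ 2 * r ^ 2 / 9 - a ^ 2) * (r - a) := by
    nlinarith [mul_le_mul_of_nonneg_right hv hra.le]
  have hintA : 9 * (r ^ 2 * (r - a)) ≤ 8 * c ^ 2 * (r ^ 2 * (r - a)) :=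
    mul_le_mul_of_nonneg_right hc2.le (by positivity)
  have hintB : 0 ≤ (r - a) * (r - 2 * a) ^ 2 := mul_nonneg hra.le (sq_nonneg _)
  have key1 : (x - a) ^ 2 + S ≤ (c * r) ^ 2 := by
    have step : ((x - a) ^ 2 + S) * (r - a) ≤ (c * r) ^ 2 * (r - a) := by
      linarith [hv', hintA, hintB, mul_nonneg ha0 (sq_nonneg (x + (r - a) / 2))]
    exact le_of_mul_le_mul_right step hra
  have key2 : (x + a) ^ 2 + S ≤ (c * r) ^ 2 := by
    have step : ((x + a) ^ 2 + S) * (r - a) ≤ (c * r) ^ 2 * (r - a) := by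
      linarith [hv', hintA, hintB, mul_nonneg ha0 (sq_nonneg (x - (r - a) / 2))]
    exact le_of_mul_le_mul_right step hra
  have hcr : 0 < c * r := by positivity
  have hsum : ∀ b : ℝ, ‖v - EuclideanSpace.single 0 b‖ ^ 2 = (x - b) ^ 2 + S := by
    intro b
    rw [EuclideanSpace.norm_eq, Real.sq_sqrt (by positivity)]
    rw [← Finset.add_sum_erase _ _ (Finset.mem_univ 0)]
    congr 1
    · simp [sq_abs, hx]
    · apply Finset.sum_congr rfl
      intro i hi
      have hi0 : i ≠ 0 := Finset.ne_of_mem_erase hi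
      simp [EuclideanSpace.single_apply, hi0, sq_abs]
  apply max_le
  · refine le_of_pow_le_pow_left₀ two_ne_zero hcr.le ?_
    rw [hsum a]; exact key1
  · refine le_of_pow_le_pow_left₀ two_ne_zero hcr.le ?_
    rw [hsum (-a)]
    calc (x - -a) ^ 2 + S = (x + a) ^ 2 + S := by ring_nf
    _ ≤ (c * r) ^ 2 := key2
end

section
/- Let 0 ≤ a ≤ a' < r. Then for every point v = (x₁,…,x_d) with ((r+a)/(r-a))x₁² + Σ_{i=2}^d x_i² ≤ r² - a², it holds that ((r+a')/(r-a'))x₁² + Σ_{i=2}^d x_i² ≤ ((r-a)²/(r-a')²)·(r² - (a')²). -/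
theorem stmt_9 (d : ℕ) (a a' r : ℝ) (hr : 0 < r) (ha0 : 0 ≤ a) (haa' : a ≤ a') (ha'r : a' < r)
    (v : EuclideanSpace ℝ (Fin (d + 1)))
    (hv : (r + a) / (r - a) * (v 0) ^ 2 + ∑ i ∈ Finset.univ.erase 0, (v i) ^ 2 ≤ r ^ 2 - a ^ 2) :
    (r + a') / (r - a') * (v 0) ^ 2 + ∑ i ∈ Finset.univ.erase 0, (v i) ^ 2 ≤
      (r - a) ^ 2 / (r - a') ^ 2 * (r ^ 2 - a' ^ 2) := by
  set t : ℝ := (v 0) ^ 2 with ht_def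
  set S : ℝ := ∑ i ∈ Finset.univ.erase 0, (v i) ^ 2 with hS_def
  have ht : 0 ≤ t := sq_nonneg _
  have hS : 0 ≤ S := Finset.sum_nonneg fun i _ => sq_nonneg _
  have hra : 0 < r - a := by linarith
  have hra' : 0 < r - a' := by linarith
  have h1 : (r + a) * t + S * (r - a) ≤ (r ^ 2 - a ^ 2) * (r - a) := by
    have := mul_le_mul_of_nonneg_right hv hra.le
    calc (r + a) * t + S * (r - a)
        = ((r + a) / (r - a) * t + S) * (r - a) := by field_simp
      _ ≤ (r ^ 2 - a ^ 2) * (r - a) := this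
  rw [show (r + a') / (r - a') * t + S = ((r + a') * t + S * (r - a')) / (r - a') by
        field_simp,
      show (r - a) ^ 2 / (r - a') ^ 2 * (r ^ 2 - a' ^ 2)
          = (r - a) ^ 2 * (r ^ 2 - a' ^ 2) / (r - a') ^ 2 by ring,
      div_le_div_iff₀ hra' (by positivity)]
  nlinarith [mul_le_mul_of_nonneg_right h1 (by linarith : (0:ℝ) ≤ r + a'),
    mul_nonneg (mul_nonneg hS hr.le) (by linarith : (0:ℝ) ≤ a' - a),
    mul_nonneg (mul_nonneg (mul_nonneg hS hr.le) (by linarith : (0:ℝ) ≤ a' - a)) (sq_nonneg (r - a')),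
    sq_nonneg (r - a'), mul_pos hra' hra']
end

section
/- Let c_min = 3/(2√2) and c > c_min, and let 0 ≤ a ≤ a' < r. If a point v = (x₁,…,x_d) satisfies ((r+a')/(r-a'))x₁² + Σ_{i=2}^d x_i² ≤ (c/c_min)²·(r² - (a')²), then ((r+a)/(r-a))x₁² + Σ_{i=2}^d x_i² ≤ (cr/c_min)² - a². -/
theorem stmt_10 (d : ℕ) (a a' r c : ℝ) (hr : 0 < r) (ha0 : 0 ≤ a) (haa' : a ≤ a')
    (ha'r : a' < r) (hc : 3 / (2 * Real.sqrt 2) < c)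
    (v : EuclideanSpace ℝ (Fin (d + 1)))
    (hv : (r + a') / (r - a') * (v 0) ^ 2 + ∑ i ∈ Finset.univ.erase 0, (v i) ^ 2 ≤
      (c / (3 / (2 * Real.sqrt 2))) ^ 2 * (r ^ 2 - a' ^ 2)) :
    (r + a) / (r - a) * (v 0) ^ 2 + ∑ i ∈ Finset.univ.erase 0, (v i) ^ 2 ≤
      (c * r / (3 / (2 * Real.sqrt 2))) ^ 2 - a ^ 2 := by
  have hs : Real.sqrt 2 ^ 2 = 2 := Real.sq_sqrt (by norm_num)
  have hs0 : 0 < Real.sqrt 2 := Real.sqrt_pos.mpr (by norm_num)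
  have har : a < r := lt_of_le_of_lt haa' ha'r
  have h1 : (r + a) / (r - a) ≤ (r + a') / (r - a') := by
    rw [div_le_div_iff₀ (by linarith) (by linarith)]
    nlinarith
  have h2 : (r + a) / (r - a) * (v 0) ^ 2 ≤ (r + a') / (r - a') * (v 0) ^ 2 :=
    mul_le_mul_of_nonneg_right h1 (sq_nonneg _)
  have h38 : (3 / (2 * Real.sqrt 2)) ^ 2 = 9 / 8 := by
    rw [div_pow, mul_pow, hs]; norm_num
  have hk1 : (c / (3 / (2 * Real.sqrt 2))) ^ 2 = 8 * c ^ 2 / 9 := by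
    rw [div_pow, h38]; ring
  have hk2 : (c * r / (3 / (2 * Real.sqrt 2))) ^ 2 = 8 * c ^ 2 / 9 * r ^ 2 := by
    rw [div_pow, h38]; ring
  have hcm0 : (0:ℝ) < 3 / (2 * Real.sqrt 2) := by positivity
  have hc2 : 9 / 8 < c ^ 2 := by nlinarith
  have hkey : (c / (3 / (2 * Real.sqrt 2))) ^ 2 * (r ^ 2 - a' ^ 2) ≤
      (c * r / (3 / (2 * Real.sqrt 2))) ^ 2 - a ^ 2 := by
    rw [hk1, hk2]
    nlinarith [sq_nonneg a']
  linarith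
end
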